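/- In the mobility-driven epidemic model, the cumulative number of deaths D(t) at any time t ≥ 0 is a posynomial function of the control variables: for each t there is a posynomial p on ℝ_{>0}^{K·t} (in the K·t variables given by the entries of u(0),…,u(t−1)) such that D(t) = p(u(0),…,u(t−1)) for all positive control sequences, where D evolves as D(t+1) = D(t) + α_D ρ_HR H(t) with α_D > 0 and initial condition D(0) > 0. -/

import Mathlib

/-!
Posynomials in positive variables are closed under sums, products and positive scalar
multiples, and a posynomial in the first `K·t` controls is also one in the first `K·t'`
for `t ≤ t'`. The infection rate `β(t)` is a posynomial in `u(t)`, and since the rate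
constraints make every coefficient `1 - ρ - ρ'` positive, each step of the recursions for
`E, I, A, H` and `D` combines earlier states and `β(t)` by exactly these operations;
induction on `t` does the rest.
-/

/-- A posynomial on the positive orthant: a finite sum of one or more monomials
`c_i * ∏_j x_j ^ a_{i,j}` with positive coefficients and real exponents. -/
def IsPosynomial {ι : Type*} [Fintype ι] (f : (ι → ℝ) → ℝ) : Prop :=
  ∃ k : ℕ, 0 < k ∧ ∃ (c : Fin k → ℝ) (a : Fin k → ι → ℝ),
    (∀ i, 0 < c i) ∧
    ∀ x : ι → ℝ, (∀ j, 0 < x j) → f x = ∑ i, c i * ∏ j, x j ^ a i j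

/-- The state `(E(t), I(t), A(t), H(t))` of the mobility-driven epidemic model, where
the infection rate at time `t` is `β(t) = Σ_k θ_k (u_k(t))^(α_k) + b`. -/
noncomputable def epiState (K : ℕ) (θ a : Fin K → ℝ)
    (b S0 γA ρEI ρEA ρIR ρIH ρAR ρHR ρHD E0 I0 A0 H0 : ℝ)
    (u : ℕ → Fin K → ℝ) : ℕ → ℝ × ℝ × ℝ × ℝ
  | 0 => (E0, I0, A0, H0)
  | t + 1 =>
    let s := epiState K θ a b S0 γA ρEI ρEA ρIR ρIH ρAR ρHR ρHD E0 I0 A0 H0 u t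
    let β : ℝ := (∑ k, θ k * u t k ^ a k) + b
    ((1 - ρEI - ρEA) * s.1 + S0 * β * (γA * s.2.2.1 + s.2.1),
     (1 - ρIR - ρIH) * s.2.1 + ρEI * s.1,
     (1 - ρAR) * s.2.2.1 + ρEA * s.1,
     (1 - ρHR - ρHD) * s.2.2.2 + ρIH * s.2.1)

/-- The cumulative deaths `D(t)` of the mobility-driven epidemic model:
`D(t+1) = D(t) + α_D ρ_HR H(t)`. -/
noncomputable def epiD (K : ℕ) (θ a : Fin K → ℝ)
    (b S0 γA ρEI ρEA ρIR ρIH ρAR ρHR ρHD E0 I0 A0 H0 αD D0 : ℝ)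
    (u : ℕ → Fin K → ℝ) : ℕ → ℝ
  | 0 => D0
  | t + 1 => epiD K θ a b S0 γA ρEI ρEA ρIR ρIH ρAR ρHR ρHD E0 I0 A0 H0 αD D0 u t +
      αD * ρHR * (epiState K θ a b S0 γA ρEI ρEA ρIR ρIH ρAR ρHR ρHD E0 I0 A0 H0 u t).2.2.2

namespace IsPosynomial

variable {ι : Type*} [Fintype ι] {f g : (ι → ℝ) → ℝ}

theorem of_fintype {σ : Type*} [Fintype σ] [Nonempty σ] (c : σ → ℝ) (a : σ → ι → ℝ)
    (hc : ∀ i, 0 < c i)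
    (hf : ∀ x : ι → ℝ, (∀ j, 0 < x j) → f x = ∑ i, c i * ∏ j, x j ^ a i j) :
    IsPosynomial f := by
  let e := Fintype.equivFin σ
  refine ⟨Fintype.card σ, Fintype.card_pos, c ∘ e.symm, a ∘ e.symm, fun i => hc _,
    fun x hx => ?_⟩
  rw [hf x hx]
  exact (e.symm.sum_comp fun i => c i * ∏ j, x j ^ a i j).symm

theorem const {c : ℝ} (hc : 0 < c) : IsPosynomial fun _ : ι → ℝ => c :=
  of_fintype (σ := Unit) (fun _ => c) (fun _ _ => 0) (fun _ => hc) fun x _ => by simp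

theorem rpow_apply (j₀ : ι) (e : ℝ) : IsPosynomial fun x : ι → ℝ => x j₀ ^ e := by
  classical
  refine of_fintype (σ := Unit) (fun _ => 1) (fun _ => Pi.single j₀ e) (fun _ => one_pos)
    fun x _ => ?_
  simp only [Finset.univ_unique, Finset.sum_singleton, one_mul]
  rw [Fintype.prod_eq_single j₀ fun j hj => by simp [hj]]
  simp

theorem add (hf : IsPosynomial f) (hg : IsPosynomial g) : IsPosynomial fun x => f x + g x := by
  obtain ⟨k, hk, c, a, hc, hf⟩ := hf
  obtain ⟨l, -, d, b, hd, hg⟩ := hg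
  have : Nonempty (Fin k) := ⟨⟨0, hk⟩⟩
  refine of_fintype (Sum.elim c d) (Sum.elim a b) (by simp [Sum.forall, hc, hd]) fun x hx => ?_
  simp [hf x hx, hg x hx, Fintype.sum_sum_type]

theorem mul (hf : IsPosynomial f) (hg : IsPosynomial g) : IsPosynomial fun x => f x * g x := by
  obtain ⟨k, hk, c, a, hc, hf⟩ := hf
  obtain ⟨l, hl, d, b, hd, hg⟩ := hg
  have : Nonempty (Fin k) := ⟨⟨0, hk⟩⟩
  have : Nonempty (Fin l) := ⟨⟨0, hl⟩⟩
  refine of_fintype (fun i : Fin k × Fin l => c i.1 * d i.2) (fun i j => a i.1 j + b i.2 j)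
    (fun i => mul_pos (hc _) (hd _)) fun x hx => ?_
  rw [hf x hx, hg x hx, Finset.sum_mul_sum, Fintype.sum_prod_type]
  refine Finset.sum_congr rfl fun i _ => Finset.sum_congr rfl fun i' _ => ?_
  simp only [Real.rpow_add (hx _), Finset.prod_mul_distrib]
  ring

theorem sum_add {σ : Type*} (s : Finset σ) {g : σ → (ι → ℝ) → ℝ}
    (hg : ∀ i ∈ s, IsPosynomial (g i)) (hf : IsPosynomial f) :
    IsPosynomial fun x => (∑ i ∈ s, g i x) + f x := by
  classical
  induction s using Finset.induction_on with
  | empty => simpa using hf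
  | insert i s hi ih =>
    simp only [Finset.sum_insert hi, add_assoc]
    exact (hg i (s.mem_insert_self i)).add (ih fun j hj => hg j (Finset.mem_insert_of_mem hj))

theorem comp_injective {κ : Type*} [Fintype κ] (hf : IsPosynomial f) {e : ι → κ}
    (he : e.Injective) : IsPosynomial fun x : κ → ℝ => f (x ∘ e) := by
  obtain ⟨k, hk, c, a, hc, hf⟩ := hf
  refine ⟨k, hk, c, fun i => Function.extend e (a i) 0, hc, fun x hx => ?_⟩
  dsimp only
  rw [hf (x ∘ e) fun j => hx (e j)]
  refine Finset.sum_congr rfl fun i _ => congrArg _ ?_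
  refine Fintype.prod_of_injective e he _ _ (fun j hj => ?_) fun j => by
    simp [he.extend_apply]
  simp [Function.extend_apply' _ _ _ fun h => hj h]

end IsPosynomial

def IsPosynomialInControls {K : ℕ} (t : ℕ) (F : (ℕ → Fin K → ℝ) → ℝ) : Prop :=
  ∃ p : (Fin t × Fin K → ℝ) → ℝ, IsPosynomial p ∧
    ∀ u : ℕ → Fin K → ℝ, (∀ s k, 0 < u s k) → F u = p (fun q => u (q.1 : ℕ) q.2)

namespace IsPosynomialInControls

variable {K t : ℕ} {F G : (ℕ → Fin K → ℝ) → ℝ}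

theorem const {c : ℝ} (hc : 0 < c) : IsPosynomialInControls (K := K) t fun _ => c :=
  ⟨_, .const hc, fun _ _ => rfl⟩

theorem rpow_apply (s : Fin t) (k : Fin K) (e : ℝ) :
    IsPosynomialInControls t fun u => u s k ^ e :=
  ⟨_, .rpow_apply (s, k) e, fun _ _ => rfl⟩

theorem add (hF : IsPosynomialInControls t F) (hG : IsPosynomialInControls t G) :
    IsPosynomialInControls t fun u => F u + G u := by
  obtain ⟨p, hp, hF⟩ := hF
  obtain ⟨q, hq, hG⟩ := hG
  exact ⟨_, hp.add hq, fun u hu => congrArg₂ (· + ·) (hF u hu) (hG u hu)⟩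

theorem mul (hF : IsPosynomialInControls t F) (hG : IsPosynomialInControls t G) :
    IsPosynomialInControls t fun u => F u * G u := by
  obtain ⟨p, hp, hF⟩ := hF
  obtain ⟨q, hq, hG⟩ := hG
  exact ⟨_, hp.mul hq, fun u hu => congrArg₂ (· * ·) (hF u hu) (hG u hu)⟩

theorem mono {t' : ℕ} (hF : IsPosynomialInControls t F) (h : t ≤ t') :
    IsPosynomialInControls t' F := by
  obtain ⟨p, hp, hF⟩ := hF
  have he := (Fin.castLE_injective h).prodMap (Function.injective_id (α := Fin K))
  exact ⟨_, hp.comp_injective he, hF⟩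

end IsPosynomialInControls

theorem isPosynomialInControls_infectionRate {K : ℕ} {θ : Fin K → ℝ} (a : Fin K → ℝ)
    {b : ℝ} (hθ : ∀ k, 0 < θ k) (hb : 0 < b) (t : ℕ) :
    IsPosynomialInControls (t + 1) fun u => (∑ k, θ k * u t k ^ a k) + b :=
  ⟨fun x => (∑ k, θ k * x (Fin.last t, k) ^ a k) + b,
    .sum_add _ (fun k _ => (IsPosynomial.const (hθ k)).mul (.rpow_apply _ _))
      (.const hb), fun _ _ => rfl⟩

open IsPosynomialInControls in
theorem epiState_isPosynomialInControls {K : ℕ} {θ : Fin K → ℝ} (a : Fin K → ℝ)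
    {b S0 γA ρEI ρEA ρIR ρIH ρAR ρHR ρHD E0 I0 A0 H0 : ℝ}
    (hθ : ∀ k, 0 < θ k) (hb : 0 < b) (hS0 : 0 < S0) (hγA : 0 < γA)
    (hρEI : 0 < ρEI) (hρEA : 0 < ρEA) (hρIH : 0 < ρIH)
    (hEsum : ρEI + ρEA < 1) (hIsum : ρIR + ρIH < 1) (hAsum : ρAR < 1) (hHsum : ρHR + ρHD < 1)
    (hE0 : 0 < E0) (hI0 : 0 < I0) (hA0 : 0 < A0) (hH0 : 0 < H0) (t : ℕ) :
    let x := fun u => epiState K θ a b S0 γA ρEI ρEA ρIR ρIH ρAR ρHR ρHD E0 I0 A0 H0 u t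
    IsPosynomialInControls t (fun u => (x u).1) ∧
      IsPosynomialInControls t (fun u => (x u).2.1) ∧
      IsPosynomialInControls t (fun u => (x u).2.2.1) ∧
      IsPosynomialInControls t (fun u => (x u).2.2.2) := by
  induction t with
  | zero => exact ⟨const hE0, const hI0, const hA0, const hH0⟩
  | succ t ih =>
    obtain ⟨hE, hI, hA, hH⟩ := ih
    have hβ := isPosynomialInControls_infectionRate a hθ hb t
    replace hE := hE.mono t.le_succ
    replace hI := hI.mono t.le_succ
    replace hA := hA.mono t.le_succ
    replace hH := hH.mono t.le_succ
    exact ⟨((const (by linarith)).mul hE).add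
        (((const hS0).mul hβ).mul (((const hγA).mul hA).add hI)),
      ((const (by linarith)).mul hI).add ((const hρEI).mul hE),
      ((const (by linarith)).mul hA).add ((const hρEA).mul hE),
      ((const (by linarith)).mul hH).add ((const hρIH).mul hI)⟩

theorem deaths_isPosynomial_general (K : ℕ) (θ a : Fin K → ℝ)
    (b S0 γA ρEI ρEA ρIR ρIH ρAR ρHR ρHD E0 I0 A0 H0 αD D0 : ℝ)
    (hθ : ∀ k, 0 < θ k) (hb : 0 < b) (hS0 : 0 < S0) (hγA : 0 < γA)
    (hρEI : 0 < ρEI) (hρEA : 0 < ρEA) (hρIH : 0 < ρIH)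
    (hρHR : 0 < ρHR)
    (hEsum : ρEI + ρEA < 1) (hIsum : ρIR + ρIH < 1) (hAsum : ρAR < 1)
    (hHsum : ρHR + ρHD < 1)
    (hE0 : 0 < E0) (hI0 : 0 < I0) (hA0 : 0 < A0) (hH0 : 0 < H0)
    (hαD : 0 < αD) (hD0 : 0 < D0)
    (t : ℕ) :
    ∃ p : (Fin t × Fin K → ℝ) → ℝ, IsPosynomial p ∧
      ∀ u : ℕ → Fin K → ℝ, (∀ s k, 0 < u s k) →
        epiD K θ a b S0 γA ρEI ρEA ρIR ρIH ρAR ρHR ρHD E0 I0 A0 H0 αD D0 u t =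
          p (fun q => u (q.1 : ℕ) q.2) := by
  induction t with
  | zero => exact IsPosynomialInControls.const hD0
  | succ t ih =>
    have hH := (epiState_isPosynomialInControls a hθ hb hS0 hγA hρEI hρEA hρIH hEsum hIsum
      hAsum hHsum hE0 hI0 hA0 hH0 t).2.2.2
    exact (IsPosynomialInControls.mono ih t.le_succ).add
      ((IsPosynomialInControls.const (by positivity)).mul (hH.mono t.le_succ))

/-- In the mobility-driven epidemic model, the cumulative number of deaths `D(t)`
is a posynomial function of the `K·t` control variables (the entries of
`u(0), …, u(t-1)`), for every positive control sequence. -/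
theorem deaths_isPosynomial (K : ℕ) (θ a : Fin K → ℝ)
    (b S0 γA ρEI ρEA ρIR ρIH ρAR ρHR ρHD E0 I0 A0 H0 αD D0 : ℝ)
    (hθ : ∀ k, 0 < θ k) (hb : 0 < b) (hS0 : 0 < S0) (hγA : 0 < γA)
    (hρEI : 0 < ρEI) (hρEA : 0 < ρEA) (hρIR : 0 < ρIR) (hρIH : 0 < ρIH)
    (hρAR : 0 < ρAR) (hρHR : 0 < ρHR) (hρHD : 0 < ρHD)
    (hEsum : ρEI + ρEA < 1) (hIsum : ρIR + ρIH < 1) (hAsum : ρAR < 1)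
    (hHsum : ρHR + ρHD < 1)
    (hE0 : 0 < E0) (hI0 : 0 < I0) (hA0 : 0 < A0) (hH0 : 0 < H0)
    (hαD : 0 < αD) (hD0 : 0 < D0)
    (t : ℕ) :
    ∃ p : (Fin t × Fin K → ℝ) → ℝ, IsPosynomial p ∧
      ∀ u : ℕ → Fin K → ℝ, (∀ s k, 0 < u s k) →
        epiD K θ a b S0 γA ρEI ρEA ρIR ρIH ρAR ρHR ρHD E0 I0 A0 H0 αD D0 u t =
          p (fun q => u (q.1 : ℕ) q.2) :=
  deaths_isPosynomial_general K θ a b S0 γA ρEI ρEA ρIR ρIH ρAR ρHR ρHD E0 I0 A0 H0 αD D0 hθ hb hS0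
    hγA hρEI hρEA hρIH hρHR hEsum hIsum hAsum hHsum hE0 hI0 hA0 hH0 hαD hD0 t
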